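/- For every i ∈ {1,…,n}, the skew pipe dream D(s_i) associated to the simple reflection s_i equals SY_n ∖ {(n−i+1, n+i−1)}, and no ladder move is defined on D(s_i), so L(D(s_i)) = {D(s_i)}. -/

import Mathlib

open scoped Classical

/-! ## The type `Cₙ` Weyl group as signed permutations of `ℤ` -/

/-- The simple reflections `s₁, …, sₙ` of the type `Cₙ` Weyl group, acting on `ℤ`:
`s₁ = (1 -1)` and `s_k = (k-1 k)(-(k-1) -k)` for `k ≥ 2`. -/
def sC (k : ℕ) : ℤ → ℤ := fun x =>
  if k = 1 then (if x = 1 then -1 else if x = -1 then 1 else x)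
  else
    if x = (k : ℤ) then (k : ℤ) - 1
    else if x = (k : ℤ) - 1 then (k : ℤ)
    else if x = -(k : ℤ) then -((k : ℤ) - 1)
    else if x = -((k : ℤ) - 1) then -(k : ℤ) else x

/-- A signed permutation of `{±1, …, ±n}`: a bijection of `ℤ` commuting with negation and
fixing every integer of absolute value `> n`. -/
def IsSignedPerm (n : ℕ) (w : ℤ → ℤ) : Prop :=
  Function.Bijective w ∧ (∀ x : ℤ, w (-x) = -(w x)) ∧ ∀ x : ℤ, n < x.natAbs → w x = x

/-- The product `s_{i₁} s_{i₂} ⋯ s_{i_r}` of the word `l = [i₁, …, i_r]`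
(applied to `ℤ` on the left, so `s_{i_r}` acts first). -/
def wordProd (l : List ℕ) : ℤ → ℤ := (l.map sC).foldr (· ∘ ·) id

/-- The length `ℓ(w)`: the minimal number of simple reflections `s₁, …, sₙ` needed
to express `w`. -/
noncomputable def lenC (n : ℕ) (w : ℤ → ℤ) : ℕ :=
  sInf {r | ∃ l : List ℕ, l.length = r ∧ (∀ k ∈ l, 1 ≤ k ∧ k ≤ n) ∧ wordProd l = w}

/-- `l` is a reduced word for `w` in the type `Cₙ` Weyl group. -/
def IsReducedWordC (n : ℕ) (w : ℤ → ℤ) (l : List ℕ) : Prop :=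
  (∀ k ∈ l, 1 ≤ k ∧ k ≤ n) ∧ wordProd l = w ∧ l.length = lenC n w

/-- The longest element `w₀ = (1 -1)(2 -2)⋯(n -n)`. -/
def w0C (n : ℕ) : ℤ → ℤ := fun x => if x.natAbs ≤ n then -x else x

/-- The block `(m, m-1, …, 2, 1, 2, …, m-1, m)` of length `2m-1`. -/
def cBlock (m : ℕ) : List ℕ :=
  ((List.range m).map (fun t => m - t)) ++ ((List.range (m - 1)).map (fun t => t + 2))

/-- The reduced word `i_C = (1, 2,1,2, 3,2,1,2,3, …, n,…,1,…,n)` for `w₀`, of length `n²`. -/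
def iC (n : ℕ) : List ℕ := ((List.range n).map (fun k => cBlock (k + 1))).flatten

/-- `m̂(w, i)`: the number of `j ∈ {±1,…,±n}` with `-(n-i+1) ≤ j < n-i+1` and
`w⁻¹(j) < w⁻¹(n-i+1)`. -/
noncomputable def mHat (n : ℕ) (w : ℤ → ℤ) (i : ℕ) : ℕ :=
  ((Finset.Icc (-(n : ℤ)) (n : ℤ)).filter fun j =>
      j ≠ 0 ∧ -((n : ℤ) - (i : ℤ) + 1) ≤ j ∧ j < (n : ℤ) - (i : ℤ) + 1 ∧
        Function.invFun w j < Function.invFun w ((n : ℤ) - (i : ℤ) + 1)).card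

/-! ## The shifted staircase `SY n` and ladder moves -/

/-- The shifted staircase `SY_n = {(i,j) : 1 ≤ i ≤ n, i ≤ j ≤ 2n-i}`. -/
def SY (n : ℕ) : Finset (ℕ × ℕ) :=
  (Finset.Icc 1 n ×ˢ Finset.Icc 1 (2 * n)).filter fun b => b.1 ≤ b.2 ∧ b.1 + b.2 ≤ 2 * n

/-- `idxLt a b` : the box `a` comes strictly before `b` in the enumeration
`((n,n), (n-1,n+1), (n-1,n), …, (1,2), (1,1))` of `SY_n`
(rows from bottom to top, and each row from right to left). -/
def idxLt (a b : ℕ × ℕ) : Prop := b.1 < a.1 ∨ (b.1 = a.1 ∧ b.2 < a.2)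

/-- The symplectic ladder move `L_{rem}` is defined on `D` removing the box `rem` and adding
the box `(add.1, add.2 + 1)`. -/
def LadderMovable (n : ℕ) (D : Finset (ℕ × ℕ)) (rem add : ℕ × ℕ) : Prop :=
  rem ∈ D ∧ (rem.1, rem.2 + 1) ∉ D ∧
  add ∈ SY n ∧ (add.1, add.2 + 1) ∈ SY n ∧ add ∉ D ∧ (add.1, add.2 + 1) ∉ D ∧
  idxLt rem add ∧ (add.2 = rem.2 ∨ add.2 = 2 * n - rem.2) ∧
  ∀ r ∈ SY n, idxLt rem r → idxLt r add → (r.2 = rem.2 ∨ r.2 = 2 * n - rem.2) →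
    r ∈ D ∧ (r.1, r.2 + 1) ∈ D

/-- The result `D ∪ {(add.1, add.2+1)} ∖ {rem}` of a ladder move. -/
def ladderResult (D : Finset (ℕ × ℕ)) (rem add : ℕ × ℕ) : Finset (ℕ × ℕ) :=
  insert (add.1, add.2 + 1) (D.erase rem)

/-- The inverse symplectic ladder move `L⁻¹_{rem}` is defined on `D`, removing the box `rem`
and adding the box `add`. -/
def InvLadderMovable (n : ℕ) (D : Finset (ℕ × ℕ)) (rem add : ℕ × ℕ) : Prop :=
  rem ∈ D ∧ (rem.1, rem.2 - 1) ∉ D ∧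
  add ∈ SY n ∧ add ∉ D ∧ (add.1, add.2 + 1) ∉ D ∧
  idxLt add rem ∧ (add.2 = rem.2 - 1 ∨ add.2 = 2 * n - rem.2 + 1) ∧
  ∀ r ∈ SY n, idxLt add r → idxLt r rem → (r.2 = rem.2 - 1 ∨ r.2 = 2 * n - rem.2 + 1) →
    r ∈ D ∧ (r.1, r.2 + 1) ∈ D

/-- The result `D ∪ {add} ∖ {rem}` of an inverse ladder move. -/
def invLadderResult (D : Finset (ℕ × ℕ)) (rem add : ℕ × ℕ) : Finset (ℕ × ℕ) :=
  insert add (D.erase rem)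

/-- One ladder move step. -/
def LadderStep (n : ℕ) (D D' : Finset (ℕ × ℕ)) : Prop :=
  ∃ rem add, LadderMovable n D rem add ∧ D' = ladderResult D rem add

/-- `D` is obtained from `D₀` by a (possibly empty) sequence of ladder moves. -/
def InLadderClosure (n : ℕ) (D₀ D : Finset (ℕ × ℕ)) : Prop :=
  Relation.ReflTransGen (LadderStep n) D₀ D

/-! ## The skew pipe dream `D(w)` -/

/-- The `k`-th box (`0`-based) in the enumeration
`((n,n), (n-1,n+1), (n-1,n), (n-1,n-1), …, (1,2n-1), …, (1,2), (1,1))` of `SY_n`. -/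
def boxOfIdx (n k : ℕ) : ℕ × ℕ :=
  let b := Nat.sqrt k + 1
  (n + 1 - b, n + b - 1 - (k - (b - 1) * (b - 1)))

/-- The letters of the subword of `i_C` at the (`0`-based) positions `ks`. -/
def subwordLetters (n : ℕ) (ks : List ℕ) : List ℕ := ks.map fun k => (iC n).getD k 0

/-- `ks` is an increasing list of positions in `i_C` whose subword is a reduced word for `w`. -/
noncomputable def IsSubwordIndices (n : ℕ) (w : ℤ → ℤ) (ks : List ℕ) : Prop :=
  ks.Chain' (· < ·) ∧ (∀ k ∈ ks, k < n ^ 2) ∧ ks.length = lenC n w ∧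
    wordProd (subwordLetters n ks) = w

/-- `ks = k_w` is the lexicographically minimal increasing list of positions of `i_C`
carrying a reduced word for `w`. -/
noncomputable def IsMinSubwordForW (n : ℕ) (w : ℤ → ℤ) (ks : List ℕ) : Prop :=
  IsSubwordIndices n w ks ∧ ∀ ks', IsSubwordIndices n w ks' → ¬ List.Lex (· < ·) ks' ks

/-- The skew pipe dream whose boxes are those of `SY_n` at positions **not** in `ks`;
for `ks = k_w` this is the skew pipe dream `D(w)`. -/
def Dskew (n : ℕ) (ks : List ℕ) : Finset (ℕ × ℕ) :=
  ((Finset.range (n ^ 2)).filter fun k => k ∉ ks).image (boxOfIdx n)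

/-! ## The pipe diagram `G(D)` and the signed permutation `w_D` -/

/-- A side of a box in the pipe diagram. -/
inductive PSide : Type
  | north | south | east | west
deriving DecidableEq

/-- The opposite side. -/
def oppSide : PSide → PSide
  | .north => .south
  | .south => .north
  | .east => .west
  | .west => .east

/-- Membership in the extended Gelfand–Tsetlin type diagram `SY_n^(ex)`:
column `j ≤ n` has rows `1, …, 2j` and column `n+1` has rows `1, …, 2n`. -/
def exMem (n : ℕ) (b : ℕ × ℕ) : Bool :=
  decide (1 ≤ b.1 ∧ 1 ≤ b.2 ∧ b.2 ≤ n + 1 ∧ b.1 ≤ min (2 * b.2) (2 * n))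

/-- The box `b` of the rearranged diagram `Ω(D)` is a crossing. -/
def isCross (n : ℕ) (D : Finset (ℕ × ℕ)) (b : ℕ × ℕ) : Bool :=
  decide (b.2 ≤ n) &&
    (if b.1 % 2 = 1 then decide (((b.1 + 1) / 2, b.2) ∈ D)
     else decide ((b.1 / 2, 2 * n + 1 - b.2) ∈ D))

/-- The empty box `b` is an elbow joint (as opposed to a reversed elbow joint). -/
def isElbow (n : ℕ) (b : ℕ × ℕ) : Bool :=
  decide ((b.2 ≤ n ∧ b.1 % 2 = 1) ∨ (b.2 = n + 1 ∧ b.1 % 2 = 0))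

/-- Given the side `s` from which a pipe enters the box `b`, the side from which it exits:
crossings go straight, elbows join `W–N` and `S–E`, reversed elbows join `N–E` and `W–S`. -/
def exitSide (n : ℕ) (D : Finset (ℕ × ℕ)) (b : ℕ × ℕ) (s : PSide) : PSide :=
  if isCross n D b then oppSide s
  else if isElbow n b then
    match s with
    | .west => .north
    | .north => .west
    | .south => .east
    | .east => .south
  else
    match s with
    | .north => .east
    | .east => .north
    | .west => .south
    | .south => .west

/-- The neighbouring box across the given side (rows increase downwards). -/
def stepBox (b : ℕ × ℕ) : PSide → ℕ × ℕ
  | .north => (b.1 - 1, b.2)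
  | .south => (b.1 + 1, b.2)
  | .east => (b.1, b.2 + 1)
  | .west => (b.1, b.2 - 1)

/-- Trace a pipe through the diagram: returns the list of visited boxes together with
the final box and the side from which the pipe leaves the diagram. -/
def tracePipe (n : ℕ) (D : Finset (ℕ × ℕ)) :
    ℕ → ℕ × ℕ → PSide → List (ℕ × ℕ) × ((ℕ × ℕ) × PSide)
  | 0, b, s => ([b], (b, exitSide n D b s))
  | fuel + 1, b, s =>
      let ex := exitSide n D b s
      let b' := stepBox b ex
      if exMem n b' then
        let r := tracePipe n D fuel b' (oppSide ex)
        (b :: r.1, r.2)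
      else ([b], (b, ex))

/-- The data of the pipe `ℓ_k` (for `1 ≤ k ≤ n`), entering the diagram from the west. -/
def pipeData (n : ℕ) (D : Finset (ℕ × ℕ)) (k : ℕ) : List (ℕ × ℕ) × ((ℕ × ℕ) × PSide) :=
  tracePipe n D (8 * (n + 2) * (n + 2)) (2 * (n - k) + 1, n - k + 1) PSide.west

/-- `v_D(k)`: the pipe `ℓ_k` exits at the top of the `(n + 1 - v_D(k))`-th column. -/
def vD (n : ℕ) (D : Finset (ℕ × ℕ)) (k : ℕ) : ℕ := n + 1 - ((pipeData n D k).2.1).2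

/-- The number of self-crossings of the pipe `ℓ_k`: the number of boxes it visits twice. -/
def selfCross (n : ℕ) (D : Finset (ℕ × ℕ)) (k : ℕ) : ℕ :=
  ((pipeData n D k).1.dedup.filter fun b => 2 ≤ (pipeData n D k).1.count b).length

/-- `v_D⁻¹(j)`. -/
def vDinv (n : ℕ) (D : Finset (ℕ × ℕ)) (j : ℕ) : ℕ :=
  ((((List.range n).map (· + 1)).find? fun k => vD n D k == j).getD 0)

/-- The signed permutation `w_D` read off from the pipe diagram `G(D)`:
`w_D(j) = (-1)^(sign(L_j)+1) · v_D⁻¹(j)`, where `sign(L_j)` is the number of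
self-crossings of the pipe `L_j = ℓ_{v_D⁻¹(j)}`. -/
def wD (n : ℕ) (D : Finset (ℕ × ℕ)) : ℤ → ℤ := fun x =>
  if 1 ≤ x.natAbs ∧ x.natAbs ≤ n then
    let k := vDinv n D x.natAbs
    let val : ℤ := (-1) ^ (selfCross n D k + 1) * (k : ℤ)
    if 0 < x then val else -val
  else x

/-- The set of reduced skew pipe dreams `D ⊆ SY_n` with `w_D = w`. -/
noncomputable def RSP (n : ℕ) (w : ℤ → ℤ) : Set (Finset (ℕ × ℕ)) :=
  {D | D ⊆ SY n ∧ D.card = n ^ 2 - lenC n (wD n D) ∧ wD n D = w}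

/-! ## Skew mitosis operators -/

/-- `b0` is the box `(p_{r₀}, q_{r₀})`: the index-maximal box of `SY_n` in the columns
`{n-j+1, n+j-1}` with `(p_{r₀}, q_{r₀}+1) ∉ D`. -/
def IsR0Box (n j : ℕ) (D : Finset (ℕ × ℕ)) (b0 : ℕ × ℕ) : Prop :=
  b0 ∈ SY n ∧ (b0.2 = n + 1 - j ∨ b0.2 = n + j - 1) ∧ (b0.1, b0.2 + 1) ∉ D ∧
    ∀ b ∈ SY n, (b.2 = n + 1 - j ∨ b.2 = n + j - 1) → (b.1, b.2 + 1) ∉ D → ¬ idxLt b0 b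

/-- The condition `(†)` under which the skew mitosis operators are nonempty, with `b0` the
removed box `(p_{r₀}, q_{r₀})`. -/
def MitosisDefined (n j : ℕ) (D : Finset (ℕ × ℕ)) (b0 : ℕ × ℕ) : Prop :=
  IsR0Box n j D b0 ∧
    ∀ b ∈ SY n, (b.2 = n + 1 - j ∨ b.2 = n + j - 1) → (idxLt b0 b ∨ b = b0) → b ∈ D

/-- A ladder move `L_{p,q}` with `q ∈ {n-j+1, n+j-1}`. -/
def ColLadderStep (n j : ℕ) (D D' : Finset (ℕ × ℕ)) : Prop :=
  ∃ rem add, (rem.2 = n + 1 - j ∨ rem.2 = n + j - 1) ∧ LadderMovable n D rem add ∧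
    D' = ladderResult D rem add

/-- A ladder move `L_{p,q}` with `q ∈ {n-j+1, n+j-1}` and `p < m`. -/
def ColLadderStepLt (n j m : ℕ) (D D' : Finset (ℕ × ℕ)) : Prop :=
  ∃ rem add, (rem.2 = n + 1 - j ∨ rem.2 = n + j - 1) ∧ rem.1 < m ∧
    LadderMovable n D rem add ∧ D' = ladderResult D rem add

/-- The skew mitosis-type operator `M_j`. -/
def Mset (n j : ℕ) (D : Finset (ℕ × ℕ)) : Set (Finset (ℕ × ℕ)) :=
  {E | ∃ b0, MitosisDefined n j D b0 ∧
    Relation.ReflTransGen (ColLadderStep n j) (D.erase b0) E}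

/-- `start_j^⊤(D)`. -/
noncomputable def startT (n j : ℕ) (D : Finset (ℕ × ℕ)) : ℕ :=
  sInf ({p | (p, n + 1 - j) ∈ SY n ∧ (p, n + 1 - j) ∉ D} ∪
        {q | ∃ p, q = p + 1 ∧ (p, n + j - 1) ∈ SY n ∧ (p, n + j - 1) ∉ D} ∪
        {n + 2 - j})

/-- The transposed skew mitosis operator `mitosis_j^⊤`. -/
noncomputable def mitosisT (n j : ℕ) (D : Finset (ℕ × ℕ)) : Set (Finset (ℕ × ℕ)) :=
  {E | ∃ b0, MitosisDefined n j D b0 ∧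
    Relation.ReflTransGen (ColLadderStepLt n j (startT n j D)) (D.erase b0) E}

/-! ## Generating functions -/

/-- `d(x, D)` for the fixed index `j`. -/
def dX (n j : ℕ) (D : Finset (ℕ × ℕ)) : ℕ :=
  (D.filter fun b => b.2 = n + 1 - j ∨ b.2 = n + j - 1).card

/-- `d(y, D)` for the fixed index `j`. -/
def dY (n j : ℕ) (D : Finset (ℕ × ℕ)) : ℕ :=
  (D.filter fun b => b.1 ≤ n + 1 - j ∧ (b.2 = n + 2 - j ∨ b.2 = n + j)).card

/-- The ladder-move closure `L(D₀)` of `D₀` as a finite set. -/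
noncomputable def LSet (n : ℕ) (ks : List ℕ) : Finset (Finset (ℕ × ℕ)) :=
  (SY n).powerset.filter fun D => InLadderClosure n (Dskew n ks) D

/-- The generating function `F(x,y) = Σ_{D ∈ L(D(w))} x^{d(x,D)} y^{d(y,D)}`
as a polynomial in `ℤ[x,y] = MvPolynomial (Fin 2) ℤ`. -/
noncomputable def Fpoly (n j : ℕ) (ks : List ℕ) : MvPolynomial (Fin 2) ℤ :=
  ∑ D ∈ LSet n ks, (MvPolynomial.X 0) ^ dX n j D * (MvPolynomial.X 1) ^ dY n j D

/-- The set `mitosis_j^⊤(L(D(w)))` as a finite set. -/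
noncomputable def MitUnion (n j : ℕ) (ks : List ℕ) : Finset (Finset (ℕ × ℕ)) :=
  (SY n).powerset.filter fun E =>
    ∃ D, InLadderClosure n (Dskew n ks) D ∧ E ∈ mitosisT n j D

/-!
`sC i` has length one, and the first occurrence of the letter `i` in `i_C` is the first letter
`(i-1)²` of the block `(i, …, 1, …, i)`, since all earlier blocks only use the letters `< i`.
Hence `k_{s_i} = ((i-1)²)` and `D(s_i)` misses exactly the box `(n-i+1, n+i-1)` at that position.
A ladder move needs two horizontally adjacent boxes of `SY_n` outside the pipe dream, so none is
defined on a pipe dream that misses a single box.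
-/

lemma wordProd_singleton (k : ℕ) : wordProd [k] = sC k := by
  funext x; simp [wordProd]

lemma sC_apply_self_ne {i : ℕ} (hi : 1 ≤ i) : sC i i ≠ i := by
  unfold sC; split_ifs <;> push_cast at * <;> omega

lemma sC_apply_of_lt {a b : ℕ} (ha : 1 ≤ a) (hab : a < b) : sC a b = b := by
  unfold sC; split_ifs <;> push_cast at * <;> omega

lemma sC_injOn : Set.InjOn sC {k | 1 ≤ k} := by
  have hne : ∀ a b : ℕ, 1 ≤ a → a < b → sC a ≠ sC b := fun a b ha hab h =>
    sC_apply_self_ne (ha.trans hab.le) (congrFun h b ▸ sC_apply_of_lt ha hab)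
  intro a ha b hb h
  rcases lt_trichotomy a b with hab | hab | hab
  · exact absurd h (hne a b ha hab)
  · exact hab
  · exact absurd h.symm (hne b a hb hab)

lemma lenC_sC {n i : ℕ} (h1 : 1 ≤ i) (h2 : i ≤ n) : lenC n (sC i) = 1 := by
  have hword : ∃ l : List ℕ, l.length = 1 ∧ (∀ k ∈ l, 1 ≤ k ∧ k ≤ n) ∧ wordProd l = sC i :=
    ⟨[i], rfl, by simp [h1, h2], wordProd_singleton i⟩
  refine le_antisymm (Nat.sInf_le hword) (Nat.one_le_iff_ne_zero.mpr fun h0 => ?_)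
  rcases Nat.sInf_eq_zero.mp h0 with ⟨l, hl, -, hw⟩ | hempty
  · rw [List.length_eq_zero_iff.mp hl] at hw
    exact sC_apply_self_ne h1 (congrFun hw i).symm
  · exact Set.nonempty_iff_ne_empty.mp ⟨1, hword⟩ hempty

lemma iC_succ (n : ℕ) : iC (n + 1) = iC n ++ cBlock (n + 1) := by
  simp [iC, List.range_succ]

lemma iC_length (n : ℕ) : (iC n).length = n ^ 2 := by
  induction n with
  | zero => rfl
  | succ n ih =>
    rw [iC_succ, List.length_append, ih]
    simp only [cBlock, List.length_append, List.length_map, List.length_range]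
    ring_nf; omega

lemma mem_iC {n x : ℕ} (hx : x ∈ iC n) : 1 ≤ x ∧ x ≤ n := by
  simp only [iC, cBlock, List.mem_flatten, List.mem_map, List.mem_range,
    exists_exists_and_eq_and, List.mem_append] at hx
  obtain ⟨k, hk, ⟨t, ht, rfl⟩ | ⟨t, ht, rfl⟩⟩ := hx <;> omega

lemma iC_prefix {j n : ℕ} (h : j ≤ n) : iC j <+: iC n := by
  induction n, h using Nat.le_induction with
  | base => exact List.prefix_refl _
  | succ n _ ih => exact ih.trans (iC_succ n ▸ List.prefix_append _ _)

lemma iC_getD_of_lt {j n k : ℕ} (hjn : j ≤ n) (hk : k < j ^ 2) :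
    (iC n).getD k 0 = (iC j).getD k 0 := by
  have hkj : k < (iC j).length := (iC_length j).symm ▸ hk
  rw [List.getD_eq_getElem _ _ hkj,
    List.getD_eq_getElem _ _ ((iC_prefix hjn).length_le.trans_lt' hkj), (iC_prefix hjn).getElem hkj]

lemma iC_getD_le {j n k : ℕ} (hjn : j ≤ n) (hk : k < j ^ 2) : (iC n).getD k 0 ≤ j := by
  rw [iC_getD_of_lt hjn hk, List.getD_eq_getElem _ _ ((iC_length j).symm ▸ hk)]
  exact (mem_iC (List.getElem_mem _)).2

lemma iC_getD_sq {j n : ℕ} (hjn : j < n) : (iC n).getD (j ^ 2) 0 = j + 1 := by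
  rw [iC_getD_of_lt hjn (Nat.pow_lt_pow_left (Nat.lt_succ_self j) two_ne_zero), iC_succ,
    List.getD_append_right _ _ _ _ (iC_length j).le, iC_length, Nat.sub_self]
  simp [cBlock, List.range_succ_eq_map]

lemma mem_SY {n : ℕ} {b : ℕ × ℕ} :
    b ∈ SY n ↔ 1 ≤ b.1 ∧ b.1 ≤ n ∧ b.1 ≤ b.2 ∧ b.1 + b.2 ≤ 2 * n := by
  simp only [SY, Finset.mem_filter, Finset.mem_product, Finset.mem_Icc]
  omega

/-- Row `n - m` of `SY_n` occupies the positions `m², …, m² + 2m`, from right to left. -/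
lemma boxOfIdx_mul_self_add {n m t : ℕ} (ht : t ≤ 2 * m) :
    boxOfIdx n (m * m + t) = (n - m, n + m - t) := by
  simp only [boxOfIdx, Nat.sqrt_add_eq m (by omega : t ≤ m + m), Nat.add_sub_cancel,
    Nat.add_sub_cancel_left]
  simp only [Prod.mk.injEq]
  omega

lemma boxOfIdx_sq (n j : ℕ) : boxOfIdx n (j ^ 2) = (n - j, n + j) := by
  simpa [sq] using boxOfIdx_mul_self_add (n := n) (Nat.zero_le (2 * j))

lemma exists_mul_self_add_of_lt {n k : ℕ} (hk : k < n ^ 2) :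
    ∃ m t, m < n ∧ t ≤ 2 * m ∧ k = m * m + t := by
  have hlt := Nat.lt_succ_sqrt k
  have hle := Nat.sqrt_le k
  refine ⟨Nat.sqrt k, k - Nat.sqrt k * Nat.sqrt k, Nat.sqrt_lt'.mpr hk, ?_, by omega⟩
  simp only [Nat.succ_eq_add_one, add_mul, mul_add] at hlt
  omega

lemma boxOfIdx_mem_SY {n k : ℕ} (hk : k < n ^ 2) : boxOfIdx n k ∈ SY n := by
  obtain ⟨m, t, hm, ht, rfl⟩ := exists_mul_self_add_of_lt hk
  rw [boxOfIdx_mul_self_add ht, mem_SY]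
  omega

lemma boxOfIdx_injOn (n : ℕ) : Set.InjOn (boxOfIdx n) {k | k < n ^ 2} := by
  intro k hk k' hk' h
  obtain ⟨m, t, hm, ht, rfl⟩ := exists_mul_self_add_of_lt hk
  obtain ⟨m', t', hm', ht', rfl⟩ := exists_mul_self_add_of_lt hk'
  rw [boxOfIdx_mul_self_add ht, boxOfIdx_mul_self_add ht', Prod.mk.injEq] at h
  obtain rfl : m = m' := by omega
  omega

lemma exists_boxOfIdx_eq {n : ℕ} {b : ℕ × ℕ} (hb : b ∈ SY n) :
    ∃ k < n ^ 2, boxOfIdx n k = b := by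
  rw [mem_SY] at hb
  have ht : 2 * n - b.1 - b.2 ≤ 2 * (n - b.1) := by omega
  refine ⟨(n - b.1) * (n - b.1) + (2 * n - b.1 - b.2), ?_, ?_⟩
  · calc _ < (n - b.1 + 1) * (n - b.1 + 1) := by nlinarith
      _ ≤ n * n := Nat.mul_self_le_mul_self (by omega)
      _ = n ^ 2 := (sq n).symm
  · rw [boxOfIdx_mul_self_add ht, Prod.ext_iff]
    omega

lemma Dskew_singleton {n k : ℕ} (hk : k < n ^ 2) :
    Dskew n [k] = (SY n).erase (boxOfIdx n k) := by
  ext b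
  simp only [Dskew, Finset.mem_image, Finset.mem_filter, Finset.mem_range, Finset.mem_erase,
    List.mem_singleton]
  constructor
  · rintro ⟨k', ⟨hk', hne⟩, rfl⟩
    exact ⟨fun he => hne (boxOfIdx_injOn n hk' hk he), boxOfIdx_mem_SY hk'⟩
  · rintro ⟨hne, hb⟩
    obtain ⟨k', hk', rfl⟩ := exists_boxOfIdx_eq hb
    exact ⟨k', ⟨hk', by rintro rfl; exact hne rfl⟩, rfl⟩

lemma isSubwordIndices_sC_singleton_iff {n i k : ℕ} (h1 : 1 ≤ i) (h2 : i ≤ n) :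
    IsSubwordIndices n (sC i) [k] ↔ k < n ^ 2 ∧ (iC n).getD k 0 = i := by
  simp only [IsSubwordIndices, subwordLetters, List.map_cons, List.map_nil, wordProd_singleton,
    lenC_sC h1 h2, List.mem_singleton, forall_eq, List.length_singleton, true_and]
  constructor
  · rintro ⟨-, hk, h⟩
    have hletter := List.getD_eq_getElem (iC n) 0 ((iC_length n).symm ▸ hk)
    exact ⟨hk, sC_injOn (mem_iC (hletter ▸ List.getElem_mem _)).1 h1 h⟩
  · rintro ⟨hk, rfl⟩
    exact ⟨List.isChain_singleton k, hk, rfl⟩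

lemma IsMinSubwordForW.eq_of_sC {n i : ℕ} {ks : List ℕ} (h1 : 1 ≤ i) (h2 : i ≤ n)
    (hks : IsMinSubwordForW n (sC i) ks) : ks = [(i - 1) ^ 2] := by
  obtain ⟨hsub, hmin⟩ := hks
  obtain ⟨k, rfl⟩ := List.length_eq_one_iff.mp (hsub.2.2.1.trans (lenC_sC h1 h2))
  obtain ⟨hk, hki⟩ := (isSubwordIndices_sC_singleton_iff h1 h2).mp hsub
  have hsq : (iC n).getD ((i - 1) ^ 2) 0 = i := by
    rw [iC_getD_sq (by omega : i - 1 < n)]; omega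
  have hvalid : IsSubwordIndices n (sC i) [(i - 1) ^ 2] :=
    (isSubwordIndices_sC_singleton_iff h1 h2).mpr
      ⟨Nat.pow_lt_pow_left (by omega) two_ne_zero, hsq⟩
  have hge : (i - 1) ^ 2 ≤ k := by
    by_contra! hlt
    have := iC_getD_le (by omega : i - 1 ≤ n) hlt
    omega
  have hle : k ≤ (i - 1) ^ 2 := by
    by_contra! hgt
    exact hmin _ hvalid (List.Lex.rel hgt)
  rw [le_antisymm hle hge]

lemma not_ladderMovable_erase_SY (n : ℕ) (b rem add : ℕ × ℕ) :
    ¬ LadderMovable n ((SY n).erase b) rem add := by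
  rintro ⟨-, -, hadd, hadd', hout, hout', -⟩
  have e1 : add = b := by by_contra hne; exact hout (Finset.mem_erase.mpr ⟨hne, hadd⟩)
  have e2 : (add.1, add.2 + 1) = b := by
    by_contra hne; exact hout' (Finset.mem_erase.mpr ⟨hne, hadd'⟩)
  exact Nat.succ_ne_self _ (congrArg Prod.snd (e2.trans e1.symm))

lemma InLadderClosure.eq_of_forall_not_ladderMovable {n : ℕ} {D₀ D : Finset (ℕ × ℕ)}
    (hD₀ : ∀ rem add, ¬ LadderMovable n D₀ rem add) (hD : InLadderClosure n D₀ D) : D = D₀ := by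
  rcases Relation.ReflTransGen.cases_head hD with h | ⟨_, ⟨rem, add, hmov, -⟩, -⟩
  · exact h.symm
  · exact absurd hmov (hD₀ rem add)

/-- `D(s_i) = SY_n ∖ {(n-i+1, n+i-1)}`, no ladder move is defined on it, and
`L(D(s_i)) = {D(s_i)}`. -/
theorem Dskew_simple_reflection (n i : ℕ) (h1 : 1 ≤ i) (h2 : i ≤ n) (ks : List ℕ)
    (hks : IsMinSubwordForW n (sC i) ks) :
    Dskew n ks = (SY n).erase (n + 1 - i, n + i - 1) ∧
    (∀ rem add, ¬ LadderMovable n (Dskew n ks) rem add) ∧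
    (∀ D, InLadderClosure n (Dskew n ks) D → D = Dskew n ks) := by
  obtain rfl := hks.eq_of_sC h1 h2
  have hbox : boxOfIdx n ((i - 1) ^ 2) = (n + 1 - i, n + i - 1) := by
    rw [boxOfIdx_sq, Prod.ext_iff]
    omega
  have hD : Dskew n [(i - 1) ^ 2] = (SY n).erase (n + 1 - i, n + i - 1) := by
    rw [Dskew_singleton (Nat.pow_lt_pow_left (by omega) two_ne_zero), hbox]
  have hstuck : ∀ rem add, ¬ LadderMovable n (Dskew n [(i - 1) ^ 2]) rem add :=
    hD ▸ not_ladderMovable_erase_SY n _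
  exact ⟨hD, hstuck, fun _ => InLadderClosure.eq_of_forall_not_ladderMovable hstuck⟩
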